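/- arXiv:2309.02444 — 3 statements merged into one kernel-verified Lean document; each statement's English description precedes it below -/
import Mathlib

section
/- Let R > 0 and a, b₁, b₂ ∈ ℝ with a² + b₁² < R², a² + b₂² < R², and b₁ < b₂. Then R² + a² - b₁b₂ - a√(4R² - (b₁+b₂)²) > 0 and R² + a² - b₁b₂ + a√(4R² - (b₁+b₂)²) > 0. -/
open Real

/-- positivity of the denominator expressions. -/
theorem stmt2 (R a b₁ b₂ : ℝ) (hR : 0 < R)
    (hs : a ^ 2 + b₁ ^ 2 < R ^ 2) (hz : a ^ 2 + b₂ ^ 2 < R ^ 2) (hb : b₁ < b₂) :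
    0 < R ^ 2 + a ^ 2 - b₁ * b₂ - a * Real.sqrt (4 * R ^ 2 - (b₁ + b₂) ^ 2) ∧
    0 < R ^ 2 + a ^ 2 - b₁ * b₂ + a * Real.sqrt (4 * R ^ 2 - (b₁ + b₂) ^ 2) := by
  set D := 4 * R ^ 2 - (b₁ + b₂) ^ 2 with hD
  have hD0 : 0 ≤ D := by nlinarith [sq_nonneg (b₁ - b₂), sq_nonneg (b₁ + b₂)]
  set s := Real.sqrt D with hsdef
  have hs0 : 0 ≤ s := Real.sqrt_nonneg _
  have hs2 : s ^ 2 = D := Real.sq_sqrt hD0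
  have hE : 0 < R ^ 2 + a ^ 2 - b₁ * b₂ := by
    nlinarith [sq_nonneg (b₁ - b₂), sq_nonneg (b₁ + b₂), sq_nonneg a]
  have hkey : a ^ 2 * D < (R ^ 2 + a ^ 2 - b₁ * b₂) ^ 2 := by
    nlinarith [sq_nonneg (b₁ - b₂), sq_nonneg (b₁ + b₂), sq_nonneg a,
      mul_pos (by nlinarith [sq_nonneg b₂] : (0:ℝ) < R ^ 2 - a ^ 2 - b₁ ^ 2)
        (by nlinarith [sq_nonneg b₁] : (0:ℝ) < R ^ 2 - a ^ 2 - b₂ ^ 2),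
      sq_nonneg (R ^ 2 - b₁ * b₂ - a ^ 2), sq_nonneg (b₁ * b₂ - a ^ 2)]
  constructor
  · nlinarith [sq_nonneg (a * s), mul_nonneg hs0 hs0]
  · nlinarith [sq_nonneg (a * s), mul_nonneg hs0 hs0]
end

section
/- Let R > 0 and a, b, c₁, c₂ ∈ ℝ with a² + b² + c₁² < R², a² + b² + c₂² < R², c₁ < c₂. Then for every θ ∈ ℝ, R² + a² + b² - c₁c₂ + (a cos θ - b sin θ)√(4R² - (c₁+c₂)²) > 0. -/
open Real

/-- positivity of the denominator expression on the sphere. -/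
theorem stmt7 (R a b c₁ c₂ : ℝ) (hR : 0 < R)
    (hs : a ^ 2 + b ^ 2 + c₁ ^ 2 < R ^ 2) (hz : a ^ 2 + b ^ 2 + c₂ ^ 2 < R ^ 2)
    (hc : c₁ < c₂) :
    ∀ θ : ℝ,
      0 < R ^ 2 + a ^ 2 + b ^ 2 - c₁ * c₂ +
        (a * Real.cos θ - b * Real.sin θ) *
          Real.sqrt (4 * R ^ 2 - (c₁ + c₂) ^ 2) := by
  intro θ
  set s := Real.sqrt (4 * R ^ 2 - (c₁ + c₂) ^ 2) with hsdef
  have h4 : 0 ≤ 4 * R ^ 2 - (c₁ + c₂) ^ 2 := by nlinarith [sq_nonneg (c₁ - c₂)]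
  have hs2 : s ^ 2 = 4 * R ^ 2 - (c₁ + c₂) ^ 2 := Real.sq_sqrt h4
  have hsnn : 0 ≤ s := Real.sqrt_nonneg _
  set t := Real.sqrt (a ^ 2 + b ^ 2) with htdef
  have ht2 : t ^ 2 = a ^ 2 + b ^ 2 := Real.sq_sqrt (by positivity)
  have htnn : 0 ≤ t := Real.sqrt_nonneg _
  have habs : |a * Real.cos θ - b * Real.sin θ| ≤ t := by
    apply Real.abs_le_sqrt
    nlinarith [Real.sin_sq_add_cos_sq θ, sq_nonneg (a * Real.sin θ + b * Real.cos θ)]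
  have hD : 0 < R ^ 2 + a ^ 2 + b ^ 2 - c₁ * c₂ := by nlinarith [sq_nonneg (c₁ - c₂)]
  have hsq : (t * s) ^ 2 < (R ^ 2 + a ^ 2 + b ^ 2 - c₁ * c₂) ^ 2 := by
    have : (t * s) ^ 2 = (a ^ 2 + b ^ 2) * (4 * R ^ 2 - (c₁ + c₂) ^ 2) := by
      rw [mul_pow, ht2, hs2]
    rw [this]
    nlinarith [sq_nonneg (R ^ 2 - (a ^ 2 + b ^ 2) - c₁ * c₂), sq_nonneg (c₁ - c₂),
      mul_nonneg (add_nonneg (sq_nonneg a) (sq_nonneg b)) (sq_nonneg (c₁ - c₂))]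
  have hts : t * s < R ^ 2 + a ^ 2 + b ^ 2 - c₁ * c₂ := by
    nlinarith [mul_nonneg htnn hsnn]
  have hlb : -(t * s) ≤ (a * Real.cos θ - b * Real.sin θ) * s := by
    have := abs_le.mp habs
    nlinarith [this.1, this.2]
  linarith
end

section
/- Let R > 0, c > 0, s = (a, b₁) and z = (a, b₂) with a² + b₁² < R², a² + b₂² < R², b₁ < b₂, and define F(z,s) = (C₁ + C₂)/(C₃ (b₂ - b₁)) with C₁ = 2cR√(R² + a² - b₁b₂ - a√(4R² - (b₁+b₂)²)), C₂ = 2cR√(R² + a² - b₁b₂ + a√(4R² - (b₁+b₂)²)), C₃ = √(4R² - (b₁+b₂)²). Then 0 < F(z,s) < ∞, and F(z,s) ≤ (4√2 cR²)/(C₃ (b₂ - b₁)). -/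
open Real

private lemma aux_pos (p q : ℝ) (hp : 0 < p) (h : q ^ 2 < p ^ 2) :
    0 < p - q ∧ 0 < p + q := by
  constructor <;> nlinarith [sq_nonneg (p - q), sq_nonneg (p + q)]

/-- positivity and upper bound for the closed-form value
`F(z,s) = (C₁+C₂)/(C₃(b₂-b₁))`. -/
theorem stmt12 (R c a b₁ b₂ : ℝ) (hR : 0 < R) (hc : 0 < c)
    (hs : a ^ 2 + b₁ ^ 2 < R ^ 2) (hz : a ^ 2 + b₂ ^ 2 < R ^ 2) (hb : b₁ < b₂)
    (C₁ C₂ C₃ F : ℝ)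
    (hC₁ : C₁ = 2 * c * R * Real.sqrt (R ^ 2 + a ^ 2 - b₁ * b₂ -
      a * Real.sqrt (4 * R ^ 2 - (b₁ + b₂) ^ 2)))
    (hC₂ : C₂ = 2 * c * R * Real.sqrt (R ^ 2 + a ^ 2 - b₁ * b₂ +
      a * Real.sqrt (4 * R ^ 2 - (b₁ + b₂) ^ 2)))
    (hC₃ : C₃ = Real.sqrt (4 * R ^ 2 - (b₁ + b₂) ^ 2))
    (hF : F = (C₁ + C₂) / (C₃ * (b₂ - b₁))) :
    0 < F ∧ F ≤ 4 * Real.sqrt 2 * c * R ^ 2 / (C₃ * (b₂ - b₁)) := by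
  have hS : 0 < 4 * R ^ 2 - (b₁ + b₂) ^ 2 := by nlinarith [sq_nonneg (b₁ - b₂)]
  set D := Real.sqrt (4 * R ^ 2 - (b₁ + b₂) ^ 2) with hD
  have hDnn : 0 ≤ D := Real.sqrt_nonneg _
  have hDsq : D ^ 2 = 4 * R ^ 2 - (b₁ + b₂) ^ 2 := Real.sq_sqrt hS.le
  have hC₃pos : 0 < C₃ := by rw [hC₃]; exact Real.sqrt_pos.mpr hS
  set P := R ^ 2 + a ^ 2 - b₁ * b₂ with hP
  have h1 : 0 < R ^ 2 - a ^ 2 - b₁ ^ 2 := by nlinarith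
  have h2 : 0 < R ^ 2 - a ^ 2 - b₂ ^ 2 := by nlinarith
  have hPpos : 0 < P := by nlinarith
  have hP2 : P < 2 * R ^ 2 := by nlinarith [sq_nonneg (b₁ + b₂)]
  -- key: P² - a²D² > 0
  have hE : a ^ 2 * D ^ 2 < P ^ 2 := by
    rw [hDsq]
    have hq : 0 < (b₁ - b₂) ^ 2 := by
      have := pow_pos (sub_pos.mpr hb) 2
      nlinarith
    nlinarith [mul_pos h1 h2, mul_pos (pow_pos hR 2) hq]
  have hE' : (a * D) ^ 2 < P ^ 2 := by rw [mul_pow]; exact hE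
  obtain ⟨hx, hy⟩ := aux_pos P (a * D) hPpos hE'
  have hsx : Real.sqrt (P - a * D) ^ 2 = P - a * D := Real.sq_sqrt hx.le
  have hsy : Real.sqrt (P + a * D) ^ 2 = P + a * D := Real.sq_sqrt hy.le
  set sx := Real.sqrt (P - a * D) with hsxd
  set sy := Real.sqrt (P + a * D) with hsyd
  have hsxnn : 0 ≤ sx := Real.sqrt_nonneg _
  have hsynn : 0 ≤ sy := Real.sqrt_nonneg _
  have hsxpos : 0 < sx := Real.sqrt_pos.mpr hx
  have hC₁' : C₁ = 2 * c * R * sx := by rw [hC₁]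
  have hC₂' : C₂ = 2 * c * R * sy := by rw [hC₂]
  -- (sx + sy)² ≤ 2(x+y) = 4P < 8R²
  have hsum2 : (sx + sy) ^ 2 < 8 * R ^ 2 := by
    have h2xy : 2 * (sx * sy) ≤ sx ^ 2 + sy ^ 2 := by have := two_mul_le_add_sq sx sy; linarith
    have : (sx + sy) ^ 2 = sx ^ 2 + sy ^ 2 + 2 * (sx * sy) := by ring
    rw [this, hsx, hsy]
    have h4 : sx ^ 2 + sy ^ 2 = 2 * P := by rw [hsx, hsy]; ring
    linarith [h2xy, hsx, hsy]
  have hsqrt2 : Real.sqrt 2 ^ 2 = 2 := Real.sq_sqrt (by norm_num)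
  have hsqrt2nn : (0:ℝ) ≤ Real.sqrt 2 := Real.sqrt_nonneg _
  have hsum : sx + sy ≤ 2 * Real.sqrt 2 * R := by
    have hK : (0:ℝ) < 2 * Real.sqrt 2 * R := by positivity
    have hK2 : (2 * Real.sqrt 2 * R) ^ 2 = 8 * R ^ 2 := by
      rw [mul_pow, mul_pow, hsqrt2]; ring
    have h0 : sx + sy = Real.sqrt ((sx + sy) ^ 2) := (Real.sqrt_sq (by positivity)).symm
    rw [h0, ← Real.sqrt_sq hK.le]
    exact Real.sqrt_le_sqrt (by linarith [hsum2, hK2])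
  have hden : 0 < C₃ * (b₂ - b₁) := mul_pos hC₃pos (by linarith)
  constructor
  · rw [hF]
    apply div_pos _ hden
    have h1' : 0 < 2 * c * R * sx := by positivity
    have h2' : 0 ≤ 2 * c * R * sy := by positivity
    rw [hC₁', hC₂']
    linarith
  · rw [hF]
    gcongr
    calc C₁ + C₂ = 2 * c * R * (sx + sy) := by rw [hC₁', hC₂']; ring
      _ ≤ 2 * c * R * (2 * Real.sqrt 2 * R) :=
        mul_le_mul_of_nonneg_left hsum (by positivity)
      _ = 4 * Real.sqrt 2 * c * R ^ 2 := by ring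
end
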